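/- arXiv:1710.06852 — 2 statements merged into one kernel-verified Lean document; each statement's English description precedes it below -/
import Mathlib

section
/- Let 0 < α < 1 and let y be absolutely continuous on (0,∞). If y satisfies the Caputo–Fabrizio equation ^{CF}D^α_{0+} y(t) = F(t) for t > 0, where F is continuous on [0,∞) with F(0⁺) = 0, then y satisfies the ordinary integral equation y(t) = y(0⁺) + ((1−α)/M(α)) F(t) + (α/M(α)) ∫_0^t F(τ) dτ. In particular, the CF differential equation reduces to an ordinary (non-fractional) integral equation. -/
open MeasureTheory

/-- Caputo–Fabrizio operator with base point `0`. -/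
noncomputable def CFop (M α : ℝ) (y' : ℝ → ℝ) (t : ℝ) : ℝ :=
  (M / (1 - α)) * ∫ τ in (0 : ℝ)..t, Real.exp (-(α / (1 - α)) * (t - τ)) * y' τ


lemma integral_k_exp_neg (k a b : ℝ) :
    ∫ s in a..b, k * Real.exp (-(k*s)) = Real.exp (-(k*a)) - Real.exp (-(k*b)) := by
  have hD : ∀ s : ℝ, HasDerivAt (fun x => -Real.exp (-(k*x))) (k * Real.exp (-(k*s))) s := by
    intro s
    have h1 : HasDerivAt (fun x : ℝ => -(k*x)) (-k) s := by
      simpa using ((hasDerivAt_id s).const_mul k).fun_neg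
    have h2 := (Real.hasDerivAt_exp (-(k*s))).comp s h1
    have h3 := h2.fun_neg
    exact h3.congr_deriv (by ring)
  rw [intervalIntegral.integral_eq_sub_of_hasDerivAt (fun x _ => hD x)
    (by apply Continuous.intervalIntegrable; continuity)]
  ring
lemma core (t k : ℝ) (ht : 0 < t) (h₁ G : ℝ → ℝ)
    (hint : IntervalIntegrable h₁ volume 0 t)
    (star : ∀ s ∈ Set.Ioc (0:ℝ) t, (∫ τ in (0:ℝ)..s, h₁ τ) = Real.exp (k*s) * G s) :
    (∫ τ in (0:ℝ)..t, h₁ τ * (Real.exp (-(k*τ)) - Real.exp (-(k*t))))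
      = k * ∫ s in (0:ℝ)..t, G s := by
  set μ := volume.restrict (Set.Ioc (0:ℝ) t) with hμ
  set B : ℝ → ℝ := fun s => k * Real.exp (-(k*s)) with hB
  set f : ℝ → ℝ → ℝ := fun τ s => if τ ≤ s then h₁ τ * B s else 0 with hf
  have hh1 : Integrable h₁ μ := by
    rw [hμ, ← IntegrableOn]
    exact (intervalIntegrable_iff_integrableOn_Ioc_of_le ht.le).mp hint
  have hBc : Continuous B := by continuity
  have hBi : Integrable B μ := by
    rw [hμ, ← IntegrableOn]; exact hBc.integrableOn_Ioc
  have hbase : Integrable (fun p : ℝ×ℝ => h₁ p.1 * B p.2) (μ.prod μ) :=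
    Integrable.mul_prod hh1 hBi
  have hfi : Integrable (Function.uncurry f) (μ.prod μ) := by
    have h2 := hbase.indicator (measurableSet_le measurable_fst measurable_snd)
    have : Function.uncurry f =
        Set.indicator {p : ℝ×ℝ | p.1 ≤ p.2} (fun p => h₁ p.1 * B p.2) := by
      funext p
      simp only [Function.uncurry, hf, Set.indicator_apply, Set.mem_setOf_eq]
    rw [this]; exact h2
  have swap := integral_integral_swap hfi
  have hL : ∀ τ ∈ Set.Ioc (0:ℝ) t,
      (∫ s, f τ s ∂μ) = h₁ τ * (Real.exp (-(k*τ)) - Real.exp (-(k*t))) := by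
    intro τ hτ
    have he : (fun s => f τ s) = Set.indicator (Set.Ici τ) (fun s => h₁ τ * B s) := by
      funext s; simp only [hf, Set.indicator_apply, Set.mem_Ici]
    rw [he, hμ, integral_indicator measurableSet_Ici,
      Measure.restrict_restrict measurableSet_Ici]
    have hset : Set.Ici τ ∩ Set.Ioc 0 t = Set.Icc τ t := by
      ext s
      simp only [Set.mem_inter_iff, Set.mem_Ici, Set.mem_Ioc, Set.mem_Icc]
      constructor
      · rintro ⟨h1, _, h3⟩; exact ⟨h1, h3⟩
      · rintro ⟨h1, h2⟩; exact ⟨h1, lt_of_lt_of_le hτ.1 h1, h2⟩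
    rw [hset, integral_Icc_eq_integral_Ioc, ← intervalIntegral.integral_of_le hτ.2,
      intervalIntegral.integral_const_mul, integral_k_exp_neg]
  have hR : ∀ s ∈ Set.Ioc (0:ℝ) t, (∫ τ, f τ s ∂μ) = k * G s := by
    intro s hs
    have he : (fun τ => f τ s) = Set.indicator (Set.Iic s) (fun τ => h₁ τ * B s) := by
      funext τ; simp only [hf, Set.indicator_apply, Set.mem_Iic]
    rw [he, hμ, integral_indicator measurableSet_Iic,
      Measure.restrict_restrict measurableSet_Iic]
    have hset : Set.Iic s ∩ Set.Ioc 0 t = Set.Ioc 0 s := by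
      ext τ
      simp only [Set.mem_inter_iff, Set.mem_Iic, Set.mem_Ioc]
      constructor
      · rintro ⟨h1, h2, _⟩; exact ⟨h2, h1⟩
      · rintro ⟨h1, h2⟩; exact ⟨h2, h1, le_trans h2 hs.2⟩
    rw [hset, ← intervalIntegral.integral_of_le hs.1.le,
      intervalIntegral.integral_mul_const, star s hs, hB]
    have hcancel : Real.exp (k * s) * Real.exp (-(k * s)) = 1 := by
      rw [← Real.exp_add]; simp
    simp only []
    linear_combination (k * G s) * hcancel
  calc (∫ τ in (0:ℝ)..t, h₁ τ * (Real.exp (-(k*τ)) - Real.exp (-(k*t))))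
      = ∫ τ, h₁ τ * (Real.exp (-(k*τ)) - Real.exp (-(k*t))) ∂μ := by
        rw [hμ, intervalIntegral.integral_of_le ht.le]
    _ = ∫ τ, (∫ s, f τ s ∂μ) ∂μ := by
        rw [hμ]
        exact (setIntegral_congr_fun measurableSet_Ioc (fun τ hτ => (hL τ hτ))).symm
    _ = ∫ s, (∫ τ, f τ s ∂μ) ∂μ := swap
    _ = ∫ s, k * G s ∂μ := by
        rw [hμ]
        exact setIntegral_congr_fun measurableSet_Ioc (fun s hs => hR s hs)
    _ = k * ∫ s in (0:ℝ)..t, G s := by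
        rw [hμ, intervalIntegral.integral_of_le ht.le, integral_const_mul]

/-- If `y` is absolutely continuous on `(0,∞)` and satisfies `^{CF}D^α_{0+} y(t) = F(t)` with
`F` continuous and `F(0⁺) = 0`, then `y` satisfies the ordinary integral equation
`y(t) = y(0⁺) + ((1−α)/M(α)) F(t) + (α/M(α)) ∫_0^t F(τ) dτ`. -/
theorem CF_equation_to_integral_equation (α M y0 : ℝ) (y y' F : ℝ → ℝ)
    (hα : 0 < α) (hα1 : α < 1) (hM : 0 < M)
    (hy' : ∀ t > (0 : ℝ), IntervalIntegrable y' volume 0 t)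
    (hy : ∀ t > (0 : ℝ), y t = y0 + ∫ τ in (0 : ℝ)..t, y' τ)
    (hF : Continuous F) (hF0 : F 0 = 0)
    (heq : ∀ t > (0 : ℝ), CFop M α y' t = F t) :
    ∀ t > (0 : ℝ),
      y t = y0 + ((1 - α) / M) * F t + (α / M) * ∫ τ in (0 : ℝ)..t, F τ := by
  intro t ht
  have h1α : (0:ℝ) < 1 - α := by linarith
  set k : ℝ := α / (1 - α) with hk
  set G : ℝ → ℝ := fun s => ((1 - α)/M) * F s with hGdef
  set h₁ : ℝ → ℝ := fun τ => Real.exp (k*τ) * y' τ with hh₁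
  have star : ∀ s ∈ Set.Ioc (0:ℝ) t,
      (∫ τ in (0:ℝ)..s, h₁ τ) = Real.exp (k*s) * G s := by
    intro s hs
    have h := heq s hs.1
    simp only [CFop] at h
    set I := ∫ τ in (0:ℝ)..s, Real.exp (-(α/(1-α))*(s-τ)) * y' τ with hI
    have hI2 : I = ((1-α)/M) * F s := by
      have h3 : I = ((1-α)/M) * (M/(1-α) * I) := by
        field_simp
      rw [h3, h]
    have hmul : (∫ τ in (0:ℝ)..s, h₁ τ) = Real.exp (k*s) * I := by
      rw [hI, ← intervalIntegral.integral_const_mul]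
      apply intervalIntegral.integral_congr
      intro τ _
      show h₁ τ = Real.exp (k*s) * (Real.exp (-(α/(1-α))*(s-τ)) * y' τ)
      rw [hh₁, ← mul_assoc, ← Real.exp_add]
      simp only []
      congr 2
      rw [hk]; ring
    rw [hmul, hI2, hGdef]
  have hint1 : IntervalIntegrable h₁ volume 0 t := by
    have := (hy' t ht).continuousOn_mul
      (Continuous.continuousOn (by continuity : Continuous fun τ => Real.exp (k*τ)))
    exact this
  have hcore := core t k ht h₁ G hint1 star
  have hintA : IntervalIntegrable
      (fun τ => h₁ τ * (Real.exp (-(k*τ)) - Real.exp (-(k*t)))) volume 0 t :=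
    hint1.mul_continuousOn (Continuous.continuousOn (by continuity))
  have hintB : IntervalIntegrable (fun τ => Real.exp (-(k*t)) * h₁ τ) volume 0 t :=
    hint1.const_mul _
  have hsplit : (∫ τ in (0:ℝ)..t, y' τ)
      = (∫ τ in (0:ℝ)..t, h₁ τ * (Real.exp (-(k*τ)) - Real.exp (-(k*t))))
        + ∫ τ in (0:ℝ)..t, Real.exp (-(k*t)) * h₁ τ := by
    rw [← intervalIntegral.integral_add hintA hintB]
    apply intervalIntegral.integral_congr
    intro τ _
    have hcancel : Real.exp (k*τ) * Real.exp (-(k*τ)) = 1 := by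
      rw [← Real.exp_add]; simp
    simp only [hh₁]
    linear_combination (-(y' τ)) * hcancel
  have hB2 : (∫ τ in (0:ℝ)..t, Real.exp (-(k*t)) * h₁ τ) = G t := by
    rw [intervalIntegral.integral_const_mul, star t ⟨ht, le_refl t⟩, ← mul_assoc,
      ← Real.exp_add]
    simp
  have hkc : k * ((1-α)/M) = α / M := by
    rw [hk]; field_simp
  have hGint : k * (∫ s in (0:ℝ)..t, G s) = (α/M) * ∫ τ in (0:ℝ)..t, F τ := by
    rw [hGdef]
    simp only []
    rw [intervalIntegral.integral_const_mul, ← mul_assoc, hkc]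
  rw [hy t ht, hsplit, hcore, hB2]
  rw [hGdef]
  simp only []
  linarith [hGint]
end

section
/- Let 0 < α < 1 and suppose y is absolutely continuous on (0,∞) and satisfies ^{ABC}D^α_{0+} y(t) = F(t) with F continuous. Then y satisfies the fractional integral equation y(t) = y(0⁺) + ((1−α)/B(α)) F(t) + (α/B(α)) J^α_{0+} F(t), where J^α_{0+} F(t) = (1/Γ(α)) ∫_0^t (t−τ)^{α−1} F(τ) dτ is the Riemann–Liouville integral of order α, provided F(0⁺) = 0. -/
open MeasureTheory

/-- Real one-parameter Mittag-Leffler function `E_α(z) = Σ_k z^k/Γ(αk+1)`. -/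
noncomputable def mlR (α z : ℝ) : ℝ := ∑' k : ℕ, z ^ k / Real.Gamma (α * k + 1)

/-- Atangana–Baleanu (Caputo sense) operator with base point `0`. -/
noncomputable def ABCop (B α : ℝ) (y' : ℝ → ℝ) (t : ℝ) : ℝ :=
  (B / (1 - α)) * ∫ τ in (0 : ℝ)..t, mlR α (-(α / (1 - α)) * (t - τ) ^ α) * y' τ

/-- Riemann–Liouville fractional integral `J^σ_{0+} F(t) = (1/Γ(σ)) ∫_0^t (t−τ)^{σ−1} F(τ) dτ`. -/
noncomputable def RLr (σ : ℝ) (F : ℝ → ℝ) (t : ℝ) : ℝ :=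
  (Real.Gamma σ)⁻¹ * ∫ τ in (0 : ℝ)..t, (t - τ) ^ (σ - 1) * F τ

/-!
Put `K s = E_α(-λ s^α)` with `λ = α/(1-α)`, so that the equation reads
`F = (B/(1-α)) ∫_0^t K(t-u) y'(u) du`. Integrating the Mittag-Leffler series termwise against the
Beta integral gives `λ J^α K = 1 - K`, and Fubini on the triangle `0 < u < τ < t` gives
`J^α (K ⋆ y') = (J^α K) ⋆ y'`. Hence `(α/B) J^α F = (1 - K) ⋆ y'` while `((1-α)/B) F = K ⋆ y'`,
and the two add up to `∫_0^t y' = y t - y0`.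
-/

open Filter Topology Set

namespace Real

theorem rpow_sub_one_le_Gamma_add_div_Gamma {x a : ℝ} (hx : 1 < x) (ha : 0 < a) :
    (x - 1) ^ a ≤ Gamma (x + a) / Gamma x := by
  -- slopes of the convex `log ∘ Gamma` over `[x-1, x]` and `[x, x+a]`; the first is `log (x-1)`
  have hslope := convexOn_log_Gamma.slope_mono_adjacent (x := x - 1) (y := x) (z := x + a)
    (mem_Ioi.2 (by linarith)) (mem_Ioi.2 (by linarith)) (by linarith) (by linarith)
  have hΓ : Gamma x = (x - 1) * Gamma (x - 1) := by
    simpa using Gamma_add_one (s := x - 1) (by linarith)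
  have hx1 : 0 < x - 1 := by linarith
  have hΓpos : 0 < Gamma (x - 1) := Gamma_pos_of_pos hx1
  simp only [Function.comp_apply, sub_sub_cancel, div_one, add_sub_cancel_left, hΓ,
    log_mul hx1.ne' hΓpos.ne', add_sub_cancel_right] at hslope
  rw [le_div_iff₀ (by positivity), ← log_le_log_iff (by positivity)
    (Gamma_pos_of_pos (by linarith)), log_mul (by positivity) (by positivity),
    log_rpow hx1, hΓ, log_mul hx1.ne' hΓpos.ne']
  rw [le_div_iff₀ ha] at hslope
  linarith

theorem tendsto_Gamma_div_Gamma_add_atTop {a : ℝ} (ha : 0 < a) :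
    Tendsto (fun x => Gamma x / Gamma (x + a)) atTop (𝓝 0) := by
  have hbound : Tendsto (fun x : ℝ => (x - 1) ^ (-a)) atTop (𝓝 0) :=
    (tendsto_rpow_neg_atTop ha).comp (tendsto_atTop_add_const_right _ (-1) tendsto_id)
  refine tendsto_of_tendsto_of_tendsto_of_le_of_le' tendsto_const_nhds hbound ?_ ?_
  · filter_upwards [eventually_gt_atTop 0] with x hx
    exact div_nonneg (Gamma_pos_of_pos hx).le (Gamma_pos_of_pos (by linarith)).le
  · filter_upwards [eventually_gt_atTop 1] with x hx
    rw [rpow_neg (by linarith), ← inv_div]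
    exact inv_anti₀ (by have := sub_pos.2 hx; positivity)
      (rpow_sub_one_le_Gamma_add_div_Gamma hx ha)

end Real

section MittagLeffler

variable {α : ℝ}

noncomputable def mlSeries (α : ℝ) : FormalMultilinearSeries ℝ ℝ ℝ :=
  FormalMultilinearSeries.ofScalars ℝ fun k : ℕ => (Real.Gamma (α * k + 1))⁻¹

theorem mlSeries_radius (hα : 0 < α) : (mlSeries α).radius = ⊤ := by
  refine FormalMultilinearSeries.ofScalars_radius_eq_top_of_tendsto _ _
    (Eventually.of_forall fun k => inv_ne_zero (Real.Gamma_pos_of_pos (by positivity)).ne') ?_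
  have hlin : Tendsto (fun k : ℕ => α * k + 1) atTop atTop :=
    tendsto_atTop_add_const_right _ 1 (tendsto_natCast_atTop_atTop.const_mul_atTop hα)
  refine ((Real.tendsto_Gamma_div_Gamma_add_atTop hα).comp hlin).congr fun k => ?_
  have hpos : ∀ x : ℝ, 0 ≤ x → 0 < Real.Gamma (x + 1) := fun x hx =>
    Real.Gamma_pos_of_pos (by linarith)
  simp only [Function.comp_apply, Nat.succ_eq_add_one, Nat.cast_add_one, norm_inv,
    Real.norm_of_nonneg (hpos _ (by positivity : (0:ℝ) ≤ α * k)).le,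
    Real.norm_of_nonneg (hpos _ (by positivity : (0:ℝ) ≤ α * (k + 1))).le]
  rw [inv_div_inv, mul_add_one, add_right_comm]

theorem mlR_eq_sum_mlSeries : mlR α = (mlSeries α).sum := by
  ext z
  simp only [mlR, mlSeries, FormalMultilinearSeries.sum,
    FormalMultilinearSeries.ofScalars_apply_eq, smul_eq_mul, div_eq_inv_mul]

theorem hasSum_mlR (hα : 0 < α) (z : ℝ) :
    HasSum (fun k : ℕ => z ^ k / Real.Gamma (α * k + 1)) (mlR α z) := by
  have h := (mlSeries α).hasSum (x := z) (by simp [mlSeries_radius hα])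
  rw [mlR_eq_sum_mlSeries]
  unfold mlSeries at h ⊢
  simpa only [FormalMultilinearSeries.ofScalars_apply_eq, smul_eq_mul, div_eq_inv_mul] using h

theorem continuous_mlR (hα : 0 < α) : Continuous (mlR α) := by
  rw [mlR_eq_sum_mlSeries, ← continuousOn_univ]
  simpa [mlSeries_radius hα] using (mlSeries α).continuousOn

theorem mlR_zero (α : ℝ) : mlR α 0 = 1 := by
  simp [mlR, zero_pow_eq, ite_div]

end MittagLeffler

theorem integral_rpow_mul_sub_rpow {a b T : ℝ} (ha : 0 < a) (hb : 0 < b) (hT : 0 < T) :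
    ∫ x in (0:ℝ)..T, x ^ (a - 1) * (T - x) ^ (b - 1)
      = Real.Gamma a * Real.Gamma b / Real.Gamma (a + b) * T ^ (a + b - 1) := by
  have hbeta := Complex.betaIntegral_scaled a b hT
  rw [Complex.betaIntegral_eq_Gamma_mul_div _ _ (by simpa using ha) (by simpa using hb),
    ← Complex.ofReal_add, Complex.Gamma_ofReal, Complex.Gamma_ofReal, Complex.Gamma_ofReal,
    mul_comm] at hbeta
  apply Complex.ofReal_injective
  rw [← intervalIntegral.integral_ofReal]
  push_cast
  convert hbeta using 1
  · refine intervalIntegral.integral_congr fun x hx => ?_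
    rw [uIcc_of_le hT.le] at hx
    rw [Complex.ofReal_cpow hx.1, Complex.ofReal_cpow (sub_nonneg.2 hx.2)]
    push_cast
    rfl
  · rw [Complex.ofReal_cpow hT.le]
    push_cast
    rfl

theorem intervalIntegrable_sub_rpow {r : ℝ} (hr : -1 < r) (T a b : ℝ) :
    IntervalIntegrable (fun s => (T - s) ^ r) volume a b := by
  simpa using
    (intervalIntegral.intervalIntegrable_rpow' hr (a := T - a) (b := T - b)).comp_sub_left T

theorem RLr_rpow {σ c T : ℝ} (hσ : 0 < σ) (hc : -1 < c) (hT : 0 < T) :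
    RLr σ (fun s => s ^ c) T = Real.Gamma (c + 1) / Real.Gamma (σ + c + 1) * T ^ (σ + c) := by
  have hbeta := integral_rpow_mul_sub_rpow (a := c + 1) (by linarith) hσ hT
  simp only [add_sub_cancel_right] at hbeta
  rw [RLr]
  simp_rw [mul_comm ((T - _) ^ (σ - 1))]
  rw [hbeta, show c + 1 + σ = σ + c + 1 by ring, show σ + c + 1 - 1 = σ + c by ring]
  field_simp [(Real.Gamma_pos_of_pos hσ).ne']

theorem intervalIntegral.integral_indicator_Ici {E : Type*} [NormedAddCommGroup E]
    [NormedSpace ℝ E] {μ : Measure ℝ} [NullSingletonClass μ] {f : ℝ → E} {a₁ a₂ a₃ : ℝ}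
    (h : a₂ ∈ Icc a₁ a₃) :
    ∫ x in a₁..a₃, (Ici a₂).indicator f x ∂μ = ∫ x in a₂..a₃, f x ∂μ := by
  have hset : (Ici a₂ ∩ Ioc a₁ a₃ : Set ℝ) =ᵐ[μ] (Ioc a₂ a₃ : Set ℝ) := by
    have : (Ioi a₂ ∩ Ioc a₁ a₃ : Set ℝ) = Ioc a₂ a₃ := by
      ext x
      simp only [mem_inter_iff, mem_Ioi, mem_Ioc]
      exact ⟨fun ⟨h₂, _, h₃⟩ => ⟨h₂, h₃⟩, fun ⟨h₂, h₃⟩ => ⟨h₂, h.1.trans_lt h₂, h₃⟩⟩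
    exact this ▸ Ioi_ae_eq_Ici.symm.inter (ae_eq_refl _)
  rw [intervalIntegral.integral_of_le (h.1.trans h.2), intervalIntegral.integral_of_le h.2,
    MeasureTheory.integral_indicator measurableSet_Ici, Measure.restrict_restrict measurableSet_Ici,
    setIntegral_congr_set hset]

theorem integrableOn_Ioc_prod_kernel_mul {f g : ℝ → ℝ} {K : ℝ → ℝ → ℝ} {a b c d : ℝ}
    (hf : IntegrableOn f (Ioc a b)) (hg : IntegrableOn g (Ioc c d)) (hK : Continuous K.uncurry) :
    IntegrableOn (fun p : ℝ × ℝ => K p.1 p.2 * (f p.1 * g p.2)) (Ioc a b ×ˢ Ioc c d) := by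
  obtain ⟨M, hM⟩ := (isCompact_Icc.prod isCompact_Icc).exists_bound_of_continuousOn
    (s := Icc a b ×ˢ Icc c d) hK.continuousOn
  rw [IntegrableOn, Measure.volume_eq_prod]
  refine Integrable.bdd_mul (c := M) ?_ hK.aestronglyMeasurable ?_
  · rw [← Measure.prod_restrict]
    exact hf.mul_prod hg
  · filter_upwards [ae_restrict_mem (measurableSet_Ioc.prod measurableSet_Ioc)] with p hp
    exact hM p ⟨Ioc_subset_Icc_self hp.1, Ioc_subset_Icc_self hp.2⟩

theorem integral_mul_integral_triangle_swap {a g : ℝ → ℝ} {K : ℝ → ℝ → ℝ} {t : ℝ} (ht : 0 ≤ t)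
    (ha : IntervalIntegrable a volume 0 t) (hg : IntervalIntegrable g volume 0 t)
    (hK : Continuous K.uncurry) :
    ∫ τ in (0:ℝ)..t, a τ * ∫ u in (0:ℝ)..τ, K τ u * g u
      = ∫ u in (0:ℝ)..t, (∫ τ in u..t, a τ * K τ u) * g u := by
  -- both sides are iterated integrals over the square of `G`, which vanishes off the triangle
  set G : ℝ → ℝ → ℝ := fun τ u => if u ≤ τ then K τ u * (a τ * g u) else 0 with hG
  have hGint : IntegrableOn G.uncurry (uIoc 0 t ×ˢ uIoc 0 t) := by
    rw [intervalIntegrable_iff_integrableOn_Ioc_of_le ht] at ha hg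
    have hGeq : G.uncurry = {p | p.2 ≤ p.1}.indicator fun p => K p.1 p.2 * (a p.1 * g p.2) := by
      ext ⟨τ, u⟩
      simp [hG, indicator_apply]
    rw [uIoc_of_le ht, hGeq]
    exact (integrableOn_Ioc_prod_kernel_mul ha hg hK).indicator
      (measurableSet_le measurable_snd measurable_fst)
  have hL : ∀ τ ∈ uIcc 0 t, a τ * ∫ u in (0:ℝ)..τ, K τ u * g u = ∫ u in (0:ℝ)..t, G τ u := by
    intro τ hτ
    rw [uIcc_of_le ht] at hτ
    rw [← intervalIntegral.integral_indicator hτ, ← intervalIntegral.integral_const_mul]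
    refine intervalIntegral.integral_congr fun u _ => ?_
    simp only [hG, indicator_apply, mem_ofPred_eq]
    split_ifs <;> ring
  have hR : ∀ u ∈ uIcc 0 t, (∫ τ in u..t, a τ * K τ u) * g u = ∫ τ in (0:ℝ)..t, G τ u := by
    intro u hu
    rw [uIcc_of_le ht] at hu
    rw [← intervalIntegral.integral_indicator_Ici hu, ← intervalIntegral.integral_mul_const]
    refine intervalIntegral.integral_congr fun τ _ => ?_
    simp only [hG, indicator_apply, mem_Ici]
    split_ifs <;> ring
  rw [intervalIntegral.integral_congr hL, intervalIntegral.integral_congr hR]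
  exact intervalIntegral_intervalIntegral_swap hGint

theorem RLr_convolution {σ t : ℝ} {K g : ℝ → ℝ} (hσ : 0 < σ) (ht : 0 ≤ t) (hK : Continuous K)
    (hg : IntervalIntegrable g volume 0 t) :
    RLr σ (fun τ => ∫ u in (0:ℝ)..τ, K (τ - u) * g u) t
      = ∫ u in (0:ℝ)..t, RLr σ K (t - u) * g u := by
  have hswap := integral_mul_integral_triangle_swap (K := fun τ u => K (τ - u)) ht
    (intervalIntegrable_sub_rpow (by linarith : -1 < σ - 1) t 0 t) hg
    (hK.comp (continuous_fst.sub continuous_snd))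
  simp only [RLr, mul_assoc, intervalIntegral.integral_const_mul, hswap]
  congr 1
  refine intervalIntegral.integral_congr fun u _ => ?_
  congr 1
  simpa only [sub_sub_sub_cancel_right, sub_self] using
    intervalIntegral.integral_comp_sub_right (a := u) (b := t)
      (fun s => (t - u - s) ^ (σ - 1) * K s) u

theorem RLr_congr {σ t : ℝ} {f g : ℝ → ℝ} (ht : 0 ≤ t) (h : EqOn f g (Ioc 0 t)) :
    RLr σ f t = RLr σ g t := by
  unfold RLr
  congr 1
  refine intervalIntegral.integral_congr_ae (Eventually.of_forall fun s hs => ?_)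
  rw [uIoc_of_le ht] at hs
  rw [h hs]

theorem RLr_const_mul (σ c t : ℝ) (f : ℝ → ℝ) :
    RLr σ (fun s => c * f s) t = c * RLr σ f t := by
  simp only [RLr, mul_left_comm _ c, intervalIntegral.integral_const_mul]

theorem hasSum_RLr_mlR_terms {α : ℝ} (hα : 0 < α) (lam : ℝ) {T : ℝ} (hT : 0 ≤ T) :
    HasSum (fun n : ℕ => RLr α (fun s => (-lam * s ^ α) ^ n / Real.Gamma (α * n + 1)) T)
      (RLr α (fun s => mlR α (-lam * s ^ α)) T) := by
  refine HasSum.mul_left _ (intervalIntegral.hasSum_integral_of_dominated_convergence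
    (fun n s => (T - s) ^ (α - 1) * ((|lam| * T ^ α) ^ n / Real.Gamma (α * n + 1))) ?_ ?_ ?_ ?_ ?_)
  · exact fun n => Measurable.aestronglyMeasurable (by fun_prop)
  · refine fun n => Eventually.of_forall fun s hs => ?_
    rw [uIoc_of_le hT] at hs
    have hΓ : 0 < Real.Gamma (α * n + 1) := Real.Gamma_pos_of_pos (by positivity)
    rw [norm_mul, norm_div, norm_pow, norm_mul, norm_neg, Real.norm_of_nonneg hΓ.le,
      Real.norm_of_nonneg (Real.rpow_nonneg (sub_nonneg.2 hs.2) _),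
      Real.norm_of_nonneg (Real.rpow_nonneg hs.1.le _), Real.norm_eq_abs]
    have hTs : 0 ≤ (T - s) ^ (α - 1) := Real.rpow_nonneg (sub_nonneg.2 hs.2) _
    have hs0 : 0 ≤ s ^ α := Real.rpow_nonneg hs.1.le _
    have hsT : s ^ α ≤ T ^ α := Real.rpow_le_rpow hs.1.le hs.2 hα.le
    gcongr
  · exact Eventually.of_forall fun s _ => (hasSum_mlR hα _).summable.mul_left _
  · simp_rw [tsum_mul_left, (hasSum_mlR hα _).tsum_eq]
    exact (intervalIntegrable_sub_rpow (by linarith) T 0 T).mul_const _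
  · exact Eventually.of_forall fun s _ => (hasSum_mlR hα _).mul_left _

theorem mul_RLr_mlR {α : ℝ} (hα : 0 < α) (lam : ℝ) {T : ℝ} (hT : 0 ≤ T) :
    lam * RLr α (fun s => mlR α (-lam * s ^ α)) T = 1 - mlR α (-lam * T ^ α) := by
  rcases hT.eq_or_lt with rfl | hT
  · simp [RLr, Real.zero_rpow hα.ne', mlR_zero]
  have hterm : ∀ n : ℕ, lam * RLr α (fun s => (-lam * s ^ α) ^ n / Real.Gamma (α * n + 1)) T
      = -((-lam * T ^ α) ^ (n + 1) / Real.Gamma (α * ↑(n + 1) + 1)) := by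
    intro n
    have hpow : EqOn (fun s => (-lam * s ^ α) ^ n / Real.Gamma (α * n + 1))
        (fun s => (-lam) ^ n / Real.Gamma (α * n + 1) * s ^ (α * n)) (Ioc 0 T) := by
      intro s hs
      simp only [mul_pow, ← Real.rpow_natCast, ← Real.rpow_mul hs.1.le]
      ring
    have hTpow : (T ^ α) ^ (n + 1) = T ^ (α + α * n) := by
      rw [← Real.rpow_natCast, ← Real.rpow_mul hT.le]
      push_cast
      ring_nf
    have hαn : 0 ≤ α * n := by positivity
    have hΓ : Real.Gamma (α * n + 1) ≠ 0 := (Real.Gamma_pos_of_pos (by linarith)).ne'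
    rw [RLr_congr hT.le hpow, RLr_const_mul, RLr_rpow hα (by linarith) hT,
      mul_pow, hTpow, show α * ↑(n + 1) + 1 = α + α * n + 1 by push_cast; ring]
    field_simp
    ring
  have htail : HasSum (fun n : ℕ => (-lam * T ^ α) ^ (n + 1) / Real.Gamma (α * ↑(n + 1) + 1))
      (mlR α (-lam * T ^ α) - 1) := by
    simpa using (hasSum_nat_add_iff' 1).2 (hasSum_mlR hα (-lam * T ^ α))
  have hsum := (hasSum_RLr_mlR_terms hα lam hT.le).mul_left lam
  simp only [hterm] at hsum
  rw [hsum.unique htail.neg]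
  ring

theorem ABC_equation_to_integral_equation_general (α B y0 : ℝ) (y y' F : ℝ → ℝ)
    (hα : 0 < α) (hα1 : α < 1) (hB : 0 < B)
    (hy' : ∀ t > (0 : ℝ), IntervalIntegrable y' volume 0 t)
    (hy : ∀ t > (0 : ℝ), y t = y0 + ∫ τ in (0 : ℝ)..t, y' τ)
    (heq : ∀ t > (0 : ℝ), ABCop B α y' t = F t) :
    ∀ t > (0 : ℝ),
      y t = y0 + ((1 - α) / B) * F t + (α / B) * RLr α F t := by
  intro t ht
  have h1α : 0 < 1 - α := sub_pos.2 hα1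
  set K : ℝ → ℝ := fun s => mlR α (-(α / (1 - α)) * s ^ α)
  have hK : Continuous K :=
    (continuous_mlR hα).comp (continuous_const.mul (Real.continuous_rpow_const hα.le))
  have hKRL : ∀ s ≥ 0, 1 - K s = α / (1 - α) * RLr α K s := fun s hs =>
    (mul_RLr_mlR hα _ hs).symm
  have hKF : (1 - α) / B * F t = ∫ u in (0:ℝ)..t, K (t - u) * y' u := by
    have hc : (1 - α) / B * (B / (1 - α)) = 1 := by field_simp
    rw [← heq t ht, ABCop, ← mul_assoc, hc, one_mul]
  have hRLF : α / B * RLr α F t = ∫ u in (0:ℝ)..t, (1 - K (t - u)) * y' u := by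
    have hF : EqOn F (fun τ => B / (1 - α) * ∫ u in (0:ℝ)..τ, K (τ - u) * y' u) (Ioc 0 t) :=
      fun τ hτ => (heq τ hτ.1).symm
    have hc : α / B * (B / (1 - α)) = α / (1 - α) := by field_simp
    rw [RLr_congr ht.le hF, RLr_const_mul, RLr_convolution hα ht.le hK (hy' t ht), ← mul_assoc,
      hc, ← intervalIntegral.integral_const_mul]
    refine intervalIntegral.integral_congr fun u hu => ?_
    rw [uIcc_of_le ht.le] at hu
    rw [hKRL _ (sub_nonneg.2 hu.2), mul_assoc]
  have hKt : Continuous fun u => K (t - u) := hK.comp (continuous_const.sub continuous_id)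
  have hKt' : Continuous fun u => 1 - K (t - u) := continuous_const.sub hKt
  rw [hy t ht, add_assoc, hKF, hRLF, ← intervalIntegral.integral_add
    ((hy' t ht).continuousOn_mul hKt.continuousOn) ((hy' t ht).continuousOn_mul hKt'.continuousOn)]
  congr 1
  refine intervalIntegral.integral_congr fun u _ => ?_
  ring

/-- If `y` is absolutely continuous on `(0,∞)` and satisfies `^{ABC}D^α_{0+} y(t) = F(t)` with
`F` continuous and `F(0⁺) = 0`, then `y` satisfies the fractional integral equation
`y(t) = y(0⁺) + ((1−α)/B(α)) F(t) + (α/B(α)) J^α_{0+} F(t)`. -/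
theorem ABC_equation_to_integral_equation (α B y0 : ℝ) (y y' F : ℝ → ℝ)
    (hα : 0 < α) (hα1 : α < 1) (hB : 0 < B)
    (hy' : ∀ t > (0 : ℝ), IntervalIntegrable y' volume 0 t)
    (hy : ∀ t > (0 : ℝ), y t = y0 + ∫ τ in (0 : ℝ)..t, y' τ)
    (hF : Continuous F) (hF0 : F 0 = 0)
    (heq : ∀ t > (0 : ℝ), ABCop B α y' t = F t) :
    ∀ t > (0 : ℝ),
      y t = y0 + ((1 - α) / B) * F t + (α / B) * RLr α F t :=
  ABC_equation_to_integral_equation_general α B y0 y y' F hα hα1 hB hy' hy heq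
end
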